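/- Let {f_n} be a sequence of real functions, each twice differentiable on an interval around x, such that (i) f_n converges pointwise on that interval to a function f differentiable at x, and (ii) for some h>0, the second derivative f_n'' is nonnegative on [x-h, x+h] for all n (i.e., f_n' is monotone nondecreasing there). Then lim_{n→∞} f_n'(x) = f'(x). -/

import Mathlib

/-!
Convexity of `f n` traps `(f n)'(x)` between the left and the right difference quotients of
`f n` at `x`, at every scale. For a fixed scale these quotients converge to those of `F`, and at a
small enough scale the quotients of `F` are as close to `F'(x)` as we like.
-/

open Filter Topology

theorem Filter.Tendsto.slope {ι : Type*} {l : Filter ι} {u : ι → ℝ → ℝ} {F : ℝ → ℝ} {a b : ℝ}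
    (ha : Tendsto (fun i => u i a) l (𝓝 (F a))) (hb : Tendsto (fun i => u i b) l (𝓝 (F b))) :
    Tendsto (fun i => slope (u i) a b) l (𝓝 (slope F a b)) := by
  simpa only [slope_def_field] using (hb.sub ha).div_const (b - a)

theorem tendsto_deriv_of_convexOn {ι : Type*} {l : Filter ι} {u : ι → ℝ → ℝ} {F : ℝ → ℝ}
    {F' x : ℝ} {s : Set ℝ} (hs : s ∈ 𝓝 x) (hconvex : ∀ i, ConvexOn ℝ s (u i))
    (hdiff : ∀ i, DifferentiableAt ℝ (u i) x)
    (hlim : ∀ y ∈ s, Tendsto (fun i => u i y) l (𝓝 (F y))) (hF : HasDerivAt F F' x) :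
    Tendsto (fun i => deriv (u i) x) l (𝓝 F') := by
  have hxs : x ∈ s := mem_of_mem_nhds hs
  obtain ⟨hF_left, hF_right⟩ := hasDerivAt_iff_tendsto_slope_left_right.mp hF
  refine tendsto_order.2 ⟨fun a ha => ?_, fun b hb => ?_⟩
  · obtain ⟨y, hay, hys, hyx⟩ := ((hF_left.eventually (eventually_gt_nhds ha)).and
      (Eventually.and (nhdsWithin_le_nhds hs) self_mem_nhdsWithin)).exists
    filter_upwards [((hlim y hys).slope (hlim x hxs)).eventually (eventually_gt_nhds
      (by rwa [slope_comm]))] with i hi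
    exact hi.trans_le ((hconvex i).slope_le_deriv hys hxs hyx (hdiff i))
  · obtain ⟨y, hby, hys, hxy⟩ := ((hF_right.eventually (eventually_lt_nhds hb)).and
      (Eventually.and (nhdsWithin_le_nhds hs) self_mem_nhdsWithin)).exists
    filter_upwards [((hlim x hxs).slope (hlim y hys)).eventually (eventually_lt_nhds hby)]
      with i hi
    exact ((hconvex i).deriv_le_slope hxs hys hxy (hdiff i)).trans_lt hi

/-- Interchanging limits and derivatives: if `f n` are twice differentiable on a
neighborhood `[x-h, x+h]` of `x`, converge pointwise there to a function `F`
differentiable at `x`, and each `f n` has nonnegative second derivative on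
`[x-h, x+h]`, then `(f n)' x → F' x`. -/
theorem interchange_limit_deriv
    (f : ℕ → ℝ → ℝ) (F : ℝ → ℝ) (x h : ℝ) (hh : 0 < h)
    (hdiff : ∀ n, ∀ y ∈ Set.Icc (x - h) (x + h), DifferentiableAt ℝ (f n) y)
    (hdiff2 : ∀ n, ∀ y ∈ Set.Icc (x - h) (x + h), DifferentiableAt ℝ (deriv (f n)) y)
    (hconv : ∀ y ∈ Set.Icc (x - h) (x + h),
      Filter.Tendsto (fun n => f n y) Filter.atTop (nhds (F y)))
    (hF : DifferentiableAt ℝ F x)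
    (hsecond : ∀ n, ∀ y ∈ Set.Icc (x - h) (x + h), 0 ≤ deriv (deriv (f n)) y) :
    Filter.Tendsto (fun n => deriv (f n) x) Filter.atTop (nhds (deriv F x)) := by
  have hx : x ∈ Set.Icc (x - h) (x + h) := ⟨by linarith, by linarith⟩
  have hconvex : ∀ n, ConvexOn ℝ (Set.Icc (x - h) (x + h)) (f n) := fun n =>
    convexOn_of_deriv2_nonneg' (convex_Icc _ _)
      (fun y hy => (hdiff n y hy).differentiableWithinAt)
      (fun y hy => (hdiff2 n y hy).differentiableWithinAt) (hsecond n)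
  exact tendsto_deriv_of_convexOn (Icc_mem_nhds (by linarith) (by linarith)) hconvex
    (fun n => hdiff n x hx) hconv hF.hasDerivAt
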